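/- Let G = (Q, A, R, π) be a nonadaptive-query single-prover r-round game, let G' be its oracularization, and let θ' be a no-signaling strategy of G'. With ε_cons(q,k), β_{q_{[1,k]}}, θ^(k), and the hybrid distributions h^⟨k⟩_q defined as in the hybrid construction, for every q ∈ Q^r one has SD(h^⟨1⟩_q, h^⟨r⟩_q) ≤ 2 Σ_{k=1}^r ε_cons(q,k) = 2r ε_cons(q), where ε_cons(q) = (1/r) Σ_{k=1}^r ε_cons(q,k). -/

import Mathlib

/-!
Summing out the common tail of kernels, the hybrids `h^⟨k⟩` and `h^⟨k+1⟩` differ only through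
their law on `A^{k+1}`, namely `β_k ⊗ θ^(k+1)` versus `β_{k+1}`; as `θ^(k+1)` is the conditional
law of `β_{k+1}`, their `ℓ¹` distance is that between `β_k` and the `A^k`-marginal of `β_{k+1}`.
Both are compared with the prefix marginals of the first prover's answer law: the two provers'
answers disagree on the prefix with probability `ε_cons(q, j)`, so by the coupling inequality
`β_j` is `2 ε_cons(q, j)`-close to the `A^j`-marginal of that law. Hence
`‖h^⟨k⟩ - h^⟨k+1⟩‖₁ ≤ 2 ε_cons(q, k) + 2 ε_cons(q, k+1)`, and the triangle inequality along
`k = 1, …, r` gives `‖h^⟨1⟩ - h^⟨r⟩‖₁ ≤ 4 Σ_k ε_cons(q, k)`.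
-/

attribute [local instance] Classical.propDecidable

noncomputable section

/-- Statistical difference between two functions on a finite set. -/
def statDiff {S : Type*} [Fintype S] (p q : S → ℝ) : ℝ :=
  (1 / 2) * ∑ s, |p s - q s|

/-- The length-`k` prefix of a tuple indexed by `Fin r` (with junk values in positions `≥ r`,
which are never used when `k ≤ r`). -/
def pref {X : Type*} [Nonempty X] {r : ℕ} (x : Fin r → X) (k : ℕ) : Fin k → X :=
  fun i => if h : (i : ℕ) < r then x ⟨i, h⟩ else Classical.arbitrary X

/-- The first `k` coordinates of `a : Fin r → A` coincide with `a' : Fin k → A`. -/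
def consistentPrefix {A : Type*} (r k : ℕ) (a : Fin r → A) (a' : Fin k → A) : Prop :=
  ∀ i : Fin k, ∀ h : (i : ℕ) < r, a ⟨i, h⟩ = a' i

/-- `θ'` is a no-signaling strategy of the oracularization of an `r`-round game. -/
def IsNoSignalingStrategy {Q A : Type*} [Fintype Q] [Fintype A] [Nonempty Q] [Nonempty A]
    (r : ℕ)
    (θ' : (Fin r → Q) → (k : ℕ) → (Fin r → A) → (Fin k → A) → ℝ) : Prop :=
  (∀ q k, 1 ≤ k → k ≤ r → ∀ a a', 0 ≤ θ' q k a a') ∧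
  (∀ q k, 1 ≤ k → k ≤ r → (∑ a : Fin r → A, ∑ a' : Fin k → A, θ' q k a a') = 1) ∧
  (∀ q k k', 1 ≤ k → k ≤ r → 1 ≤ k' → k' ≤ r → ∀ a : Fin r → A,
    (∑ a' : Fin k → A, θ' q k a a') = ∑ a' : Fin k' → A, θ' q k' a a') ∧
  (∀ q q' k, 1 ≤ k → k ≤ r → pref q k = pref q' k →
    ∀ a' : Fin k → A, (∑ a : Fin r → A, θ' q k a a') = ∑ a : Fin r → A, θ' q' k a a')

/-- `ε_cons(q, k)`: the probability that the strategy `θ'` fails the Consistency Test,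
conditioned on the first prover being asked `q` and the second prover `q_{[1,k]}`. -/
def consFail {Q A : Type*} [Fintype Q] [Fintype A] (r : ℕ)
    (θ' : (Fin r → Q) → (k : ℕ) → (Fin r → A) → (Fin k → A) → ℝ)
    (q : Fin r → Q) (k : ℕ) : ℝ :=
  ∑ a : Fin r → A, ∑ a' : Fin k → A,
    if consistentPrefix r k a a' then 0 else θ' q k a a'

/-- `β_{q_{[1,k]}}(a') = Σ_{a ∈ A^r} θ'(a, a' | q, q_{[1,k]})`: the distribution of the second
prover's answer (which depends only on `q_{[1,k]}`, by the no-signaling condition). -/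
def betaNS {Q A : Type*} [Fintype Q] [Fintype A] (r : ℕ)
    (θ' : (Fin r → Q) → (k : ℕ) → (Fin r → A) → (Fin k → A) → ℝ)
    (q : Fin r → Q) (k : ℕ) (a' : Fin k → A) : ℝ :=
  ∑ a : Fin r → A, θ' q k a a'

/-- The hybrid distribution `h^⟨k⟩_q` on `A^r`:
`h^⟨k⟩_q(a) = β_{q_{[1,k]}}(a_{[1,k]}) ∏_{i=k+1}^{r} θ^(i)(a_i | q_{[1,i]}, a_{[1,i-1]})`,
where `θc q j pre a` stands for `θ^(j+1)(a | q_{[1,j+1]}, pre)`. -/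
def hybridNS {Q A : Type*} [Fintype Q] [Fintype A] [Nonempty Q] [Nonempty A] (r : ℕ)
    (θ' : (Fin r → Q) → (k : ℕ) → (Fin r → A) → (Fin k → A) → ℝ)
    (θc : (Fin r → Q) → (j : ℕ) → (Fin j → A) → A → ℝ)
    (q : Fin r → Q) (k : ℕ) (a : Fin r → A) : ℝ :=
  betaNS r θ' q k (pref a k) *
    ∏ j ∈ Finset.Ico k r, (if h : j < r then θc q j (pref a j) (a ⟨j, h⟩) else 1)

/-- `θc` gives the conditional probabilities obtained from the marginals `β`:
`θ^(k)(a_k | q_{[1,k]}, a_{[1,k-1]}) = β_{q_{[1,k]}}(a_{[1,k]})/Σ_a β_{q_{[1,k]}}(a_{[1,k-1]},a)`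
whenever the denominator is positive, and an arbitrary distribution where it vanishes. -/
def IsConditional {Q A : Type*} [Fintype Q] [Fintype A] (r : ℕ)
    (θ' : (Fin r → Q) → (k : ℕ) → (Fin r → A) → (Fin k → A) → ℝ)
    (θc : (Fin r → Q) → (j : ℕ) → (Fin j → A) → A → ℝ) : Prop :=
  (∀ q j, j + 1 ≤ r → ∀ pre : Fin j → A,
    (∀ a, 0 ≤ θc q j pre a) ∧ (∑ a, θc q j pre a) = 1) ∧
  (∀ q j, j + 1 ≤ r → ∀ pre : Fin j → A,
    0 < (∑ b, betaNS r θ' q (j + 1) (Fin.snoc pre b)) →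
    ∀ a, θc q j pre a =
      betaNS r θ' q (j + 1) (Fin.snoc pre a) /
        ∑ b, betaNS r θ' q (j + 1) (Fin.snoc pre b))

open Finset

theorem sum_fin_succ_tuple_snoc {A M : Type*} [Fintype A] [AddCommMonoid M] {k : ℕ}
    (f : (Fin (k + 1) → A) → M) :
    ∑ p, f p = ∑ pre : Fin k → A, ∑ b, f (Fin.snoc pre b) := by
  rw [← (Fin.snocEquiv fun _ => A).sum_comp, Fintype.sum_prod_type, sum_comm]
  rfl

theorem sum_abs_sub_ite_sum {Y : Type*} [Fintype Y] {w : Y → ℝ} (hw : ∀ y, 0 ≤ w y) (y₀ : Y) :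
    ∑ y, |w y - if y₀ = y then ∑ y', w y' else 0| = 2 * ∑ y, if y₀ = y then 0 else w y := by
  have hrest : ∑ y, (if y₀ = y then 0 else w y) = ∑ y', w y' - w y₀ := by
    rw [eq_sub_iff_add_eq, ← Fintype.sum_ite_eq y₀ w, ← sum_add_distrib]
    exact sum_congr rfl fun y _ => by split_ifs <;> simp
  have hle : w y₀ ≤ ∑ y', w y' := single_le_sum (fun y _ => hw y) (mem_univ y₀)
  have hterm : ∀ y, |w y - if y₀ = y then ∑ y', w y' else 0| =
      (if y₀ = y then ∑ y', w y' - w y₀ else 0) + (if y₀ = y then 0 else w y) := by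
    intro y
    split_ifs with h
    · subst h
      rw [abs_sub_comm, abs_of_nonneg (sub_nonneg.2 hle), add_zero]
    · rw [sub_zero, abs_of_nonneg (hw y), zero_add]
  rw [sum_congr rfl fun y _ => hterm y, sum_add_distrib, Fintype.sum_ite_eq, hrest]
  ring

/-- The coupling inequality: if `θ` is the joint law of `(X, Y)`, the laws of `Y` and of `f X`
are `2 P(f X ≠ Y)`-close in `ℓ¹`. -/
theorem sum_abs_sub_pushforward_le {X Y : Type*} [Fintype X] [Fintype Y] {θ : X → Y → ℝ}
    (hθ : ∀ x y, 0 ≤ θ x y) (f : X → Y) :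
    ∑ y, |∑ x, θ x y - ∑ x, if f x = y then ∑ y', θ x y' else 0| ≤
      2 * ∑ x, ∑ y, if f x = y then 0 else θ x y := by
  calc ∑ y, |∑ x, θ x y - ∑ x, if f x = y then ∑ y', θ x y' else 0|
      = ∑ y, |∑ x, (θ x y - if f x = y then ∑ y', θ x y' else 0)| := by
        simp only [sum_sub_distrib]
    _ ≤ ∑ y, ∑ x, |θ x y - if f x = y then ∑ y', θ x y' else 0| :=
        sum_le_sum fun y _ => abs_sum_le_sum_abs _ _
    _ = 2 * ∑ x, ∑ y, if f x = y then 0 else θ x y := by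
        rw [sum_comm, mul_sum]
        exact sum_congr rfl fun x _ => sum_abs_sub_ite_sum (hθ x) (f x)

theorem sum_abs_mul_sub_eq_of_cond {ι : Type*} [Fintype ι] {x : ℝ} (hx : 0 ≤ x)
    {w c : ι → ℝ} (hw : ∀ i, 0 ≤ w i) (hc : ∀ i, 0 ≤ c i) (hc_sum : ∑ i, c i = 1)
    (hcw : 0 < ∑ i, w i → ∀ i, c i = w i / ∑ j, w j) :
    ∑ i, |x * c i - w i| = |x - ∑ i, w i| := by
  rcases (sum_nonneg fun i _ => hw i).lt_or_eq with hpos | hzero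
  · have hterm : ∀ i, |x * c i - w i| = |x - ∑ j, w j| * (w i / ∑ j, w j) := by
      intro i
      rw [hcw hpos i, ← abs_of_nonneg (div_nonneg (hw i) hpos.le), ← abs_mul,
        abs_of_nonneg (div_nonneg (hw i) hpos.le)]
      congr 1
      field_simp
    rw [sum_congr rfl fun i _ => hterm i, ← mul_sum, ← sum_div, div_self hpos.ne', mul_one]
  · have hw0 : ∀ i, w i = 0 := fun i =>
      (sum_eq_zero_iff_of_nonneg fun j _ => hw j).1 hzero.symm i (mem_univ i)
    simp only [hw0, sub_zero, sum_const_zero, abs_of_nonneg hx,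
      abs_of_nonneg (mul_nonneg hx (hc _)), ← mul_sum, hc_sum, mul_one]

theorem sum_abs_sum_snoc_sub_sum_snoc_le {A : Type*} [Fintype A] {k : ℕ}
    (f g : (Fin (k + 1) → A) → ℝ) :
    ∑ pre : Fin k → A, |∑ b, f (Fin.snoc pre b) - ∑ b, g (Fin.snoc pre b)| ≤ ∑ p, |f p - g p| := by
  rw [sum_fin_succ_tuple_snoc]
  refine sum_le_sum fun pre _ => ?_
  rw [← sum_sub_distrib]
  exact abs_sum_le_sum_abs _ _

theorem sum_abs_sub_le_sum_Ico_sum_abs_sub {S : Type*} [Fintype S] (f : ℕ → S → ℝ) {m n : ℕ}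
    (hmn : m ≤ n) :
    ∑ s, |f m s - f n s| ≤ ∑ k ∈ Ico m n, ∑ s, |f k s - f (k + 1) s| := by
  rw [sum_comm]
  refine sum_le_sum fun s _ => ?_
  simpa only [Real.dist_eq] using dist_le_Ico_sum_dist (fun k => f k s) hmn

theorem sum_Ico_add_succ_le {f : ℕ → ℝ} {m n : ℕ} (hf : ∀ k ∈ Icc m n, 0 ≤ f k) :
    ∑ k ∈ Ico m n, (f k + f (k + 1)) ≤ 2 * ∑ k ∈ Icc m n, f k := by
  have h₁ : ∑ k ∈ Ico m n, f k ≤ ∑ k ∈ Icc m n, f k :=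
    sum_le_sum_of_subset_of_nonneg Ico_subset_Icc_self fun k hk _ => hf k hk
  have h₂ : ∑ k ∈ Ico m n, f (k + 1) ≤ ∑ k ∈ Icc m n, f k := by
    rw [sum_Ico_add', Ico_add_one_add_one_eq_Ioc]
    exact sum_le_sum_of_subset_of_nonneg Ioc_subset_Icc_self fun k hk _ => hf k hk
  rw [sum_add_distrib]
  linarith

section Prefix

variable {A : Type*} [Nonempty A] {r : ℕ}

theorem pref_self (a : Fin r → A) : pref a r = a := by
  funext i
  simp [pref]

theorem init_pref (a : Fin r → A) (k : ℕ) : Fin.init (pref a (k + 1)) = pref a k := by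
  funext i
  simp [Fin.init, pref]

theorem pref_succ {k : ℕ} (hk : k < r) (a : Fin r → A) :
    pref a (k + 1) = Fin.snoc (pref a k) (a ⟨k, hk⟩) := by
  rw [← Fin.snoc_init_self (pref a (k + 1)), init_pref]
  simp [pref, hk]

theorem consistentPrefix_iff {k : ℕ} (hk : k ≤ r) (a : Fin r → A) (a' : Fin k → A) :
    consistentPrefix r k a a' ↔ pref a k = a' := by
  constructor
  · intro h
    funext i
    simp [pref, lt_of_lt_of_le i.isLt hk, h i]
  · rintro rfl i hi
    simp [pref, hi]

variable [Fintype A]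

def prefixMarginal (μ : (Fin r → A) → ℝ) (k : ℕ) (pre : Fin k → A) : ℝ :=
  ∑ a, if pref a k = pre then μ a else 0

theorem sum_prefixMarginal_snoc (μ : (Fin r → A) → ℝ) {k : ℕ} (hk : k < r) (pre : Fin k → A) :
    ∑ b, prefixMarginal μ (k + 1) (Fin.snoc pre b) = prefixMarginal μ k pre := by
  unfold prefixMarginal
  rw [sum_comm]
  refine sum_congr rfl fun a _ => ?_
  simp only [pref_succ hk a, Fin.snoc_inj]
  by_cases hpre : pref a k = pre <;> simp [hpre]

end Prefix

section TailProduct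

variable {Q A : Type*} [Nonempty A] {r : ℕ}
  (θc : (Fin r → Q) → (j : ℕ) → (Fin j → A) → A → ℝ) (q : Fin r → Q)

def tailProd (m : ℕ) (a : Fin r → A) : ℝ :=
  ∏ j ∈ Ico m r, if h : j < r then θc q j (pref a j) (a ⟨j, h⟩) else 1

theorem hybridNS_eq_mul_tailProd [Fintype Q] [Nonempty Q] [Fintype A]
    (θ' : (Fin r → Q) → (k : ℕ) → (Fin r → A) → (Fin k → A) → ℝ) (k : ℕ) (a : Fin r → A) :
    hybridNS r θ' θc q k a = betaNS r θ' q k (pref a k) * tailProd θc q k a :=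
  rfl

theorem tailProd_of_lt {m : ℕ} (hm : m < r) (a : Fin r → A) :
    tailProd θc q m a = θc q m (pref a m) (a ⟨m, hm⟩) * tailProd θc q (m + 1) a := by
  rw [tailProd, prod_eq_prod_Ico_succ_bot hm, dif_pos hm, tailProd]

theorem tailProd_nonneg (hθc : ∀ j < r, ∀ pre b, 0 ≤ θc q j pre b) (m : ℕ) (a : Fin r → A) :
    0 ≤ tailProd θc q m a :=
  prod_nonneg fun j _ => by
    split_ifs with hj
    exacts [hθc j hj _ _, zero_le_one]

theorem sum_mul_tailProd [Fintype A] (hθc : ∀ j < r, ∀ pre, ∑ b, θc q j pre b = 1) {m : ℕ}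
    (hm : m ≤ r) (g : (Fin m → A) → ℝ) :
    ∑ a, g (pref a m) * tailProd θc q m a = ∑ pre, g pre := by
  induction hd : r - m generalizing m with
  | zero =>
    obtain rfl : m = r := by omega
    simp [tailProd, pref_self]
  | succ d ih =>
    have hmr : m < r := by omega
    have hstep := ih (m := m + 1) hmr
      (fun p => g (Fin.init p) * θc q m (Fin.init p) (p (Fin.last m))) (by omega)
    simp only [pref_succ hmr, Fin.snoc_last, Fin.init_snoc,
      sum_fin_succ_tuple_snoc] at hstep
    simp only [tailProd_of_lt θc q hmr, ← mul_assoc, hstep, ← mul_sum, hθc m hmr, mul_one]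

end TailProduct

section NoSignaling

variable {Q A : Type*} [Fintype Q] [Fintype A] [Nonempty Q] [Nonempty A] {r : ℕ}
  {θ' : (Fin r → Q) → (k : ℕ) → (Fin r → A) → (Fin k → A) → ℝ} (q : Fin r → Q)

/-- The law of the first prover's answer to `q`; by no-signaling it does not depend on which
prefix `q_{[1,k]}` the second prover receives, so it is read off at `k = r`. -/
def answerLaw (r : ℕ) (θ' : (Fin r → Q) → (k : ℕ) → (Fin r → A) → (Fin k → A) → ℝ)
    (q : Fin r → Q) (a : Fin r → A) : ℝ :=
  ∑ a' : Fin r → A, θ' q r a a'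

theorem betaNS_nonneg (hθ' : IsNoSignalingStrategy r θ') {k : ℕ} (hk1 : 1 ≤ k) (hkr : k ≤ r)
    (pre : Fin k → A) : 0 ≤ betaNS r θ' q k pre :=
  sum_nonneg fun a _ => hθ'.1 q k hk1 hkr a pre

theorem consFail_nonneg (hθ' : IsNoSignalingStrategy r θ') {k : ℕ} (hk1 : 1 ≤ k) (hkr : k ≤ r) :
    0 ≤ consFail r θ' q k :=
  sum_nonneg fun a _ => sum_nonneg fun a' _ => by
    split_ifs
    exacts [le_rfl, hθ'.1 q k hk1 hkr a a']

theorem sum_abs_betaNS_sub_prefixMarginal_le (hθ' : IsNoSignalingStrategy r θ') {k : ℕ}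
    (hk1 : 1 ≤ k) (hkr : k ≤ r) :
    ∑ pre, |betaNS r θ' q k pre - prefixMarginal (answerLaw r θ' q) k pre| ≤
      2 * consFail r θ' q k := by
  have hanswer : ∀ a, ∑ a', θ' q k a a' = answerLaw r θ' q a :=
    hθ'.2.2.1 q k r hk1 hkr (hk1.trans hkr) le_rfl
  have hcoupling := sum_abs_sub_pushforward_le (hθ'.1 q k hk1 hkr) (fun a => pref a k)
  simp only [hanswer] at hcoupling
  refine hcoupling.trans_eq ?_
  simp only [consFail, consistentPrefix_iff hkr]
  congr!

theorem sum_abs_sum_betaNS_snoc_sub_prefixMarginal_le (hθ' : IsNoSignalingStrategy r θ')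
    {k : ℕ} (hkr : k < r) :
    ∑ pre : Fin k → A, |∑ b, betaNS r θ' q (k + 1) (Fin.snoc pre b) -
        prefixMarginal (answerLaw r θ' q) k pre| ≤
      2 * consFail r θ' q (k + 1) := by
  simp only [← sum_prefixMarginal_snoc _ hkr]
  exact (sum_abs_sum_snoc_sub_sum_snoc_le _ _).trans
    (sum_abs_betaNS_sub_prefixMarginal_le q hθ' (Nat.succ_pos k) hkr)

variable {θc : (Fin r → Q) → (j : ℕ) → (Fin j → A) → A → ℝ}

theorem sum_abs_hybridNS_sub_succ_eq (hθc : IsConditional r θ' θc) {k : ℕ} (hkr : k < r) :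
    ∑ a, |hybridNS r θ' θc q k a - hybridNS r θ' θc q (k + 1) a| =
      ∑ pre : Fin k → A, ∑ b,
        |betaNS r θ' q k pre * θc q k pre b - betaNS r θ' q (k + 1) (Fin.snoc pre b)| := by
  set D : (Fin (k + 1) → A) → ℝ := fun p =>
    |betaNS r θ' q k (Fin.init p) * θc q k (Fin.init p) (p (Fin.last k)) -
      betaNS r θ' q (k + 1) p|
  have hpoint : ∀ a, |hybridNS r θ' θc q k a - hybridNS r θ' θc q (k + 1) a| =
      D (pref a (k + 1)) * tailProd θc q (k + 1) a := by
    intro a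
    rw [hybridNS_eq_mul_tailProd, hybridNS_eq_mul_tailProd, tailProd_of_lt θc q hkr, ← mul_assoc,
      ← sub_mul, abs_mul, abs_of_nonneg
        (tailProd_nonneg θc q (fun j hj pre => (hθc.1 q j hj pre).1) _ a)]
    simp only [D, pref_succ hkr, Fin.init_snoc, Fin.snoc_last]
  rw [sum_congr rfl fun a _ => hpoint a,
    sum_mul_tailProd θc q (fun j hj pre => (hθc.1 q j hj pre).2) hkr, sum_fin_succ_tuple_snoc]
  simp only [D, Fin.init_snoc, Fin.snoc_last]

theorem sum_abs_hybridNS_sub_succ_le (hθ' : IsNoSignalingStrategy r θ')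
    (hθc : IsConditional r θ' θc) {k : ℕ} (hk1 : 1 ≤ k) (hkr : k < r) :
    ∑ a, |hybridNS r θ' θc q k a - hybridNS r θ' θc q (k + 1) a| ≤
      2 * consFail r θ' q k + 2 * consFail r θ' q (k + 1) := by
  set β := betaNS r θ' q
  set m := prefixMarginal (answerLaw r θ' q)
  have hβ : ∀ pre, ∑ b, |β k pre * θc q k pre b - β (k + 1) (Fin.snoc pre b)| =
      |β k pre - ∑ b, β (k + 1) (Fin.snoc pre b)| := fun pre =>
    sum_abs_mul_sub_eq_of_cond (betaNS_nonneg q hθ' hk1 hkr.le pre)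
      (fun b => betaNS_nonneg q hθ' (Nat.succ_pos k) hkr _) (hθc.1 q k hkr pre).1
      (hθc.1 q k hkr pre).2 (hθc.2 q k hkr pre)
  calc ∑ a, |hybridNS r θ' θc q k a - hybridNS r θ' θc q (k + 1) a|
      = ∑ pre, |β k pre - ∑ b, β (k + 1) (Fin.snoc pre b)| := by
        rw [sum_abs_hybridNS_sub_succ_eq q hθc hkr]
        exact sum_congr rfl fun pre _ => hβ pre
    _ ≤ ∑ pre, (|β k pre - m k pre| + |∑ b, β (k + 1) (Fin.snoc pre b) - m k pre|) :=
        sum_le_sum fun pre _ =>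
          (abs_sub_le _ (m k pre) _).trans_eq (by rw [abs_sub_comm (m k pre)])
    _ ≤ 2 * consFail r θ' q k + 2 * consFail r θ' q (k + 1) := by
        rw [sum_add_distrib]
        exact add_le_add (sum_abs_betaNS_sub_prefixMarginal_le q hθ' hk1 hkr.le)
          (sum_abs_sum_betaNS_snoc_sub_prefixMarginal_le q hθ' hkr)

end NoSignaling

/-- For a no-signaling strategy `θ'` of the oracularized game and the
associated hybrid distributions, for every `q`,
`SD(h^⟨1⟩_q, h^⟨r⟩_q) ≤ 2 Σ_{k=1}^r ε_cons(q,k) = 2r ε_cons(q)`,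
where `ε_cons(q) = (1/r) Σ_{k=1}^r ε_cons(q,k)`. -/
theorem hybrid_statDiff_first_last
    {Q A : Type*} [Fintype Q] [Fintype A] [Nonempty Q] [Nonempty A]
    (r : ℕ) (hr : 1 ≤ r)
    (θ' : (Fin r → Q) → (k : ℕ) → (Fin r → A) → (Fin k → A) → ℝ)
    (hθ' : IsNoSignalingStrategy r θ')
    (θc : (Fin r → Q) → (j : ℕ) → (Fin j → A) → A → ℝ)
    (hθc : IsConditional r θ' θc)
    (q : Fin r → Q) :
    statDiff (hybridNS r θ' θc q 1) (hybridNS r θ' θc q r) ≤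
        2 * ∑ k ∈ Finset.Icc 1 r, consFail r θ' q k ∧
      2 * ∑ k ∈ Finset.Icc 1 r, consFail r θ' q k =
        2 * (r : ℝ) * ((1 / (r : ℝ)) * ∑ k ∈ Finset.Icc 1 r, consFail r θ' q k) := by
  have hε : ∀ k ∈ Icc 1 r, 0 ≤ consFail r θ' q k := fun k hk =>
    consFail_nonneg q hθ' (mem_Icc.1 hk).1 (mem_Icc.1 hk).2
  refine ⟨?_, by field_simp⟩
  calc statDiff (hybridNS r θ' θc q 1) (hybridNS r θ' θc q r)
      ≤ 1 / 2 * ∑ k ∈ Ico 1 r, ∑ a, |hybridNS r θ' θc q k a - hybridNS r θ' θc q (k + 1) a| :=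
        mul_le_mul_of_nonneg_left (sum_abs_sub_le_sum_Ico_sum_abs_sub _ hr) (by norm_num)
    _ ≤ 1 / 2 * ∑ k ∈ Ico 1 r, (2 * consFail r θ' q k + 2 * consFail r θ' q (k + 1)) := by
        gcongr with k hk
        exact sum_abs_hybridNS_sub_succ_le q hθ' hθc (mem_Ico.1 hk).1 (mem_Ico.1 hk).2
    _ ≤ 2 * ∑ k ∈ Icc 1 r, consFail r θ' q k := by
        have hpairs := sum_Ico_add_succ_le hε
        simp only [← mul_add, ← mul_sum]
        linarith

end
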